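/- Let n ≥ 3. For the loss function L of an n-shortcut network whose activation functions σ_pre, σ_mid, σ_post are C^∞ and satisfy σ_mid(0) = σ_post(0) = 0, the Hessian of L at the zero weight configuration w = 0 is the zero matrix: every second-order partial derivative ∂²L/∂w^{r₁,l₁}_{i₁,j₁}∂w^{r₂,l₂}_{i₂,j₂} vanishes at w = 0. -/

import Mathlib

noncomputable section

open scoped BigOperators

/-- Entrywise application of a scalar function to a vector. -/
def emap {d : ℕ} (σ : ℝ → ℝ) (v : Fin d → ℝ) : Fin d → ℝ := fun i => σ (v i)

/-- Matrix–vector product. -/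
def mvec {d : ℕ} (M : Fin d → Fin d → ℝ) (v : Fin d → ℝ) : Fin d → ℝ :=
  fun i => ∑ j, M i j * v j

/-- The transformation path with `k` weight matrices applied to `v`:
`a₁ = W₀ v`, `a_{l+1} = W_l σmid.(a_l)`; `chain σmid W k v = a_k`. -/
def chain {d : ℕ} (σmid : ℝ → ℝ) (W : ℕ → Fin d → Fin d → ℝ) :
    ℕ → (Fin d → ℝ) → (Fin d → ℝ)
  | 0, v => v
  | k + 1, v => mvec (W k) (if k = 0 then v else emap σmid (chain σmid W k v))

/-- One residual unit of an `n`-shortcut network: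
`u(x) = σpost.(Wⁿ σmid.(⋯ σmid.(W¹ σpre.(x)))) + x`. -/
def resUnit {d : ℕ} (σpre σmid σpost : ℝ → ℝ) (n : ℕ) (W : ℕ → Fin d → Fin d → ℝ)
    (x : Fin d → ℝ) : Fin d → ℝ :=
  fun i => σpost (chain σmid W n (emap σpre x) i) + x i

/-- The `n`-shortcut network with `R` residual units: composition `u_R ∘ ⋯ ∘ u_1`. -/
def net {d : ℕ} (σpre σmid σpost : ℝ → ℝ) (n : ℕ) (W : ℕ → ℕ → Fin d → Fin d → ℝ) :
    ℕ → (Fin d → ℝ) → (Fin d → ℝ)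
  | 0, x => x
  | r + 1, x => resUnit σpre σmid σpost n (W r) (net σpre σmid σpost n W r x)

/-- Extend finitely indexed weights to ℕ-indexed weights (by zero out of range). -/
def extendW {R n d : ℕ} (W : Fin R → Fin n → Fin d → Fin d → ℝ) :
    ℕ → ℕ → Fin d → Fin d → ℝ :=
  fun r l => if h : r < R ∧ l < n then W ⟨r, h.1⟩ ⟨l, h.2⟩ else 0

/-- The loss function of an `n`-shortcut network with `R` residual units,
as a function of the collection of all the weight matrices. -/
def loss {d m : ℕ} (σpre σmid σpost : ℝ → ℝ) (n R : ℕ) (X Y : Fin m → Fin d → ℝ)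
    (W : Fin R → Fin n → Fin d → Fin d → ℝ) : ℝ :=
  (1 / (2 * (m : ℝ))) *
    ∑ μ : Fin m, ∑ i, (net σpre σmid σpost n (extendW W) R (X μ) i - Y μ i) ^ 2

/-- The coordinate direction in weight space corresponding to the parameter `w^{r,l}_{i,j}`. -/
def coordDir (R n d : ℕ) (r : Fin R) (l : Fin n) (i j : Fin d) :
    Fin R → Fin n → Fin d → Fin d → ℝ :=
  fun r' l' i' j' => if r' = r ∧ l' = l ∧ i' = i ∧ j' = j then 1 else 0

/-- Second-order partial derivative of `f` at `0` along the directions `v₁, v₂`. -/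
def d2 {E : Type*} [NormedAddCommGroup E] [NormedSpace ℝ E] (f : E → ℝ) (v₁ v₂ : E) : ℝ :=
  fderiv ℝ (fun w => fderiv ℝ f w v₂) (0 : E) v₁

/-! ### Auxiliary lemmas -/

/-- If some layer before `k` has zero weight matrix, the chain output is zero. -/
lemma chain_zero {d : ℕ} {σmid : ℝ → ℝ} (hm : σmid 0 = 0) (W : ℕ → Fin d → Fin d → ℝ)
    {l0 : ℕ} (h0 : W l0 = 0) : ∀ k, l0 < k → ∀ v, chain σmid W k v = 0 := by
  intro k
  induction k with
  | zero => omega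
  | succ k ih =>
    intro hlt v
    by_cases hk : k = l0
    · subst hk
      funext i
      simp [chain, mvec, h0]
    · have hl : l0 < k := by omega
      have hk0 : k ≠ 0 := by omega
      have hz : emap σmid (chain σmid W k v) = 0 := by
        funext j
        simp [emap, ih hl v, hm]
      funext i
      simp [chain, if_neg hk0, hz, mvec]

/-- If every residual unit has some zero layer, the network is the identity. -/
lemma net_id {d : ℕ} (σpre σmid σpost : ℝ → ℝ) (hm : σmid 0 = 0) (hp : σpost 0 = 0)
    (n : ℕ) (W : ℕ → ℕ → Fin d → Fin d → ℝ)
    (hW : ∀ r : ℕ, ∃ l0 : ℕ, l0 < n ∧ W r l0 = 0) :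
    ∀ r x, net σpre σmid σpost n W r x = x := by
  intro r
  induction r with
  | zero => intro x; rfl
  | succ r ih =>
    intro x
    obtain ⟨l0, hl0, hz⟩ := hW r
    have hch : chain σmid (W r) n (emap σpre x) = 0 := chain_zero hm (W r) hz n hl0 _
    funext i
    simp [net, resUnit, ih x, hch, hp]

/-- The value of the loss at weight configurations where every unit has a zero layer. -/
lemma loss_eq {d m : ℕ} (σpre σmid σpost : ℝ → ℝ) (hm : σmid 0 = 0) (hp : σpost 0 = 0)
    (n R : ℕ) (X Y : Fin m → Fin d → ℝ) (W : Fin R → Fin n → Fin d → Fin d → ℝ)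
    (hW : ∀ r : ℕ, ∃ l0 : ℕ, l0 < n ∧ extendW W r l0 = 0) :
    loss σpre σmid σpost n R X Y W =
      (1 / (2 * (m : ℝ))) * ∑ μ : Fin m, ∑ i, (X μ i - Y μ i) ^ 2 := by
  unfold loss
  congr 1
  refine Finset.sum_congr rfl fun μ _ => Finset.sum_congr rfl fun i _ => ?_
  rw [net_id σpre σmid σpost hm hp n (extendW W) hW R (X μ)]

/-- The chain is a smooth function of the weights. -/
lemma contDiff_chain {E : Type*} [NormedAddCommGroup E] [NormedSpace ℝ E]
    {d : ℕ} {σmid : ℝ → ℝ} (hmid : ContDiff ℝ (⊤ : ℕ∞) σmid)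
    (A : E → ℕ → Fin d → Fin d → ℝ)
    (hA : ∀ k i j, ContDiff ℝ (⊤ : ℕ∞) (fun w => A w k i j))
    (g : E → Fin d → ℝ) (hg : ContDiff ℝ (⊤ : ℕ∞) g) :
    ∀ k, ContDiff ℝ (⊤ : ℕ∞) (fun w => chain σmid (A w) k (g w)) := by
  intro k
  induction k with
  | zero => simpa [chain] using hg
  | succ k ih =>
    by_cases hk : k = 0
    · subst hk
      refine contDiff_pi.2 fun i => ?_
      simp only [chain, mvec, if_pos rfl]
      exact ContDiff.sum fun j _ => (hA 0 i j).mul (contDiff_pi.1 hg j)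
    · refine contDiff_pi.2 fun i => ?_
      simp only [chain, mvec, if_neg hk]
      refine ContDiff.sum fun j _ => (hA k i j).mul ?_
      exact hmid.comp (contDiff_pi.1 ih j)

/-- The network output is a smooth function of the weights. -/
lemma contDiff_net {d R n : ℕ} {σpre σmid σpost : ℝ → ℝ}
    (hpre : ContDiff ℝ (⊤ : ℕ∞) σpre) (hmid : ContDiff ℝ (⊤ : ℕ∞) σmid) (hpost : ContDiff ℝ (⊤ : ℕ∞) σpost)
    (x : Fin d → ℝ) :
    ∀ r, ContDiff ℝ (⊤ : ℕ∞)
      (fun (W : Fin R → Fin n → Fin d → Fin d → ℝ) => net σpre σmid σpost n (extendW W) r x) := by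
  have hA : ∀ (r : ℕ) (k : ℕ) (i j : Fin d),
      ContDiff ℝ (⊤ : ℕ∞) (fun (W : Fin R → Fin n → Fin d → Fin d → ℝ) => extendW W r k i j) := by
    intro r k i j
    by_cases h : r < R ∧ k < n
    · simp only [extendW, dif_pos h]
      have h1 : ContDiff ℝ (⊤ : ℕ∞) (fun (W : Fin R → Fin n → Fin d → Fin d → ℝ) => W ⟨r, h.1⟩) :=
        (contDiff_apply ℝ _ (⟨r, h.1⟩ : Fin R))
      have h2 : ContDiff ℝ (⊤ : ℕ∞) (fun (W : Fin R → Fin n → Fin d → Fin d → ℝ) => W ⟨r, h.1⟩ ⟨k, h.2⟩) :=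
        (contDiff_apply ℝ _ (⟨k, h.2⟩ : Fin n)).comp h1
      have h3 : ContDiff ℝ (⊤ : ℕ∞)
          (fun (W : Fin R → Fin n → Fin d → Fin d → ℝ) => W ⟨r, h.1⟩ ⟨k, h.2⟩ i) :=
        (contDiff_apply ℝ _ i).comp h2
      exact (contDiff_apply ℝ _ j).comp h3
    · simp only [extendW, dif_neg h]
      exact contDiff_const
  intro r
  induction r with
  | zero => exact contDiff_const
  | succ r ih =>
    refine contDiff_pi.2 fun i => ?_
    show ContDiff ℝ (⊤ : ℕ∞) fun W =>
      resUnit σpre σmid σpost n (extendW W r)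
        (net σpre σmid σpost n (extendW W) r x) i
    simp only [resUnit]
    refine ContDiff.add ?_ (contDiff_pi.1 ih i)
    refine hpost.comp (contDiff_pi.1 ?_ i)
    refine contDiff_chain hmid (fun W k => extendW W r k) (fun k => hA r k)
      (fun W => emap σpre (net σpre σmid σpost n (extendW W) r x)) ?_ n
    exact contDiff_pi.2 fun j => hpre.comp (contDiff_pi.1 ih j)

/-- The loss is a smooth function of the weights. -/
lemma contDiff_loss {d m R n : ℕ} {σpre σmid σpost : ℝ → ℝ}
    (hpre : ContDiff ℝ (⊤ : ℕ∞) σpre) (hmid : ContDiff ℝ (⊤ : ℕ∞) σmid) (hpost : ContDiff ℝ (⊤ : ℕ∞) σpost)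
    (X Y : Fin m → Fin d → ℝ) :
    ContDiff ℝ (⊤ : ℕ∞) (loss σpre σmid σpost n R X Y) := by
  unfold loss
  refine contDiff_const.mul (ContDiff.sum fun μ _ => ContDiff.sum fun i _ => ?_)
  exact ((contDiff_pi.1 (contDiff_net hpre hmid hpost (X μ) R) i).sub contDiff_const).pow 2

/-- Theorem 2, part 1, second claim. For an `n`-shortcut network with `n ≥ 3`
and smooth activations satisfying `σmid 0 = 0` and `σpost 0 = 0`, the Hessian of the loss at the
zero weight configuration is the zero matrix: every second-order partial derivative vanishes. -/
theorem hessian_zero_of_shortcut_ge_three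
    {dx m R n : ℕ} (hn : 3 ≤ n)
    (σpre σmid σpost : ℝ → ℝ)
    (hpre : ContDiff ℝ (⊤ : ℕ∞) σpre) (hmid : ContDiff ℝ (⊤ : ℕ∞) σmid) (hpost : ContDiff ℝ (⊤ : ℕ∞) σpost)
    (hmid0 : σmid 0 = 0) (hpost0 : σpost 0 = 0)
    (X Y : Fin m → Fin dx → ℝ) :
    ∀ (r₁ r₂ : Fin R) (l₁ l₂ : Fin n) (i₁ j₁ i₂ j₂ : Fin dx),
      d2 (loss σpre σmid σpost n R X Y)
        (coordDir R n dx r₁ l₁ i₁ j₁) (coordDir R n dx r₂ l₂ i₂ j₂) = 0 := by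
  intro r₁ r₂ l₁ l₂ i₁ j₁ i₂ j₂
  set f := loss σpre σmid σpost n R X Y with hf_def
  set v₁ := coordDir R n dx r₁ l₁ i₁ j₁ with hv₁
  set v₂ := coordDir R n dx r₂ l₂ i₂ j₂ with hv₂
  have hf : ContDiff ℝ (⊤ : ℕ∞) f := contDiff_loss hpre hmid hpost X Y
  -- choose a layer index distinct from l₁ and l₂
  obtain ⟨l0, h01, h02⟩ : ∃ l0 : Fin n, l0 ≠ l₁ ∧ l0 ≠ l₂ := by
    by_contra h
    push_neg at h
    have hsub : (Finset.univ : Finset (Fin n)) ⊆ {l₁, l₂} := by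
      intro l _
      rcases eq_or_ne l l₁ with h1 | h1
      · simp [h1]
      · simp [h l h1]
    have hc := Finset.card_le_card hsub
    have h2 : ({l₁, l₂} : Finset (Fin n)).card ≤ 2 := by
      refine le_trans (Finset.card_insert_le _ _) ?_
      simp
    simp only [Finset.card_univ, Fintype.card_fin] at hc
    omega
  -- the loss is constant on the plane spanned by v₁ and v₂
  have hzero : ∀ (w : Fin R → Fin n → Fin dx → Fin dx → ℝ),
      (∀ (r' : Fin R) (i' j' : Fin dx), w r' l0 i' j' = 0) →
      ∀ r : ℕ, ∃ lz : ℕ, lz < n ∧ extendW w r lz = 0 := by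
    intro w hw r
    refine ⟨l0.val, l0.isLt, ?_⟩
    funext i j
    simp only [extendW]
    split
    · next h =>
      have : (⟨(l0 : ℕ), h.2⟩ : Fin n) = l0 := Fin.eta l0 _
      rw [this]
      exact hw _ i j
    · rfl
  have hconst : ∀ s t : ℝ, f (s • v₁ + t • v₂) = f 0 := by
    intro s t
    have hw1 : ∀ (r' : Fin R) (i' j' : Fin dx), (s • v₁ + t • v₂) r' l0 i' j' = 0 := by
      intro r' i' j'
      simp [hv₁, hv₂, coordDir, h01, h02]
    have hw0 : ∀ (r' : Fin R) (i' j' : Fin dx),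
        (0 : Fin R → Fin n → Fin dx → Fin dx → ℝ) r' l0 i' j' = 0 := by
      intro r' i' j'; rfl
    rw [hf_def, loss_eq σpre σmid σpost hmid0 hpost0 n R X Y _ (hzero _ hw1),
      loss_eq σpre σmid σpost hmid0 hpost0 n R X Y _ (hzero _ hw0)]
  -- first directional derivative along v₂ vanishes on the v₁-line
  have hf' : Differentiable ℝ f := hf.differentiable (by simp)
  have h1 : ∀ s : ℝ, fderiv ℝ f (s • v₁) v₂ = 0 := by
    intro s
    have hline : HasDerivAt (fun t : ℝ => s • v₁ + t • v₂) v₂ 0 := by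
      simpa using ((hasDerivAt_id (0 : ℝ)).smul_const v₂).const_add (s • v₁)
    have hd : HasDerivAt (fun t : ℝ => f (s • v₁ + t • v₂)) (fderiv ℝ f (s • v₁) v₂) 0 := by
      have := (hf' (s • v₁ + (0 : ℝ) • v₂)).hasFDerivAt.comp_hasDerivAt 0 hline
      simpa [Function.comp_def] using this
    have hc : HasDerivAt (fun t : ℝ => f (s • v₁ + t • v₂)) 0 0 := by
      have heq : (fun t : ℝ => f (s • v₁ + t • v₂)) = fun _ => f 0 :=
        funext fun t => hconst s t
      rw [heq]; exact hasDerivAt_const 0 _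
    exact hd.unique hc
  -- the second derivative
  set g : (Fin R → Fin n → Fin dx → Fin dx → ℝ) → ℝ := fun w => fderiv ℝ f w v₂ with hg_def
  have hgd : Differentiable ℝ g := by
    have hfd : ContDiff ℝ (⊤ : ℕ∞) (fderiv ℝ f) := hf.fderiv_right (by simp)
    intro w
    exact ((hfd.differentiable (by simp)) w).clm_apply (differentiableAt_const v₂)
  have hline1 : HasDerivAt (fun s : ℝ => s • v₁) v₁ 0 := by
    simpa using (hasDerivAt_id (0 : ℝ)).smul_const v₁
  have hd : HasDerivAt (fun s : ℝ => g (s • v₁)) (fderiv ℝ g 0 v₁) 0 := by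
    have := (hgd ((0 : ℝ) • v₁)).hasFDerivAt.comp_hasDerivAt 0 hline1
    simpa [Function.comp_def] using this
  have hc : HasDerivAt (fun s : ℝ => g (s • v₁)) 0 0 := by
    have heq : (fun s : ℝ => g (s • v₁)) = fun _ => (0 : ℝ) := funext fun s => h1 s
    rw [heq]; exact hasDerivAt_const 0 0
  have hfinal := hd.unique hc
  simpa [d2, hg_def] using hfinal

end
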